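/- Let d ≥ 2, a_c = (d-2)/2, a < a_c, and for a < b < a+1 set p = 2d/(d-2+2(b-a)), α = (1+a-b)(a_c-a)/(a_c-a+b), n = 2p/(p-2). Then the condition b < b_FS(a) := d(a_c−a)/(2√((a_c−a)² + d−1)) + a − a_c is equivalent to α > α_FS := √((d−1)/(n−1)). -/

import Mathlib

/-!
In the variables `t = a_c - a > 0` and `s = b - a ∈ (0, 1)` one has `α = 2(1-s)t/(d-2+2s)` and
`n = d/(1-s)`. After squaring, both conditions become the same polynomial inequality
`(d-1)(d-2+2s)² < 4(1-s)(d-1+s)t²`; on the `b_FS` side this rests on the factorisation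
`d² - (d-2+2s)² = 4(1-s)(d-1+s)`.
-/

namespace FelliSchneider

variable {d s t : ℝ}

theorem lt_bFS_iff (hd : 1 < d) (ht : 0 ≤ t) (hu : 0 ≤ d - 2 + 2 * s) :
    (d - 2) / 2 + s < d * t / (2 * √(t ^ 2 + d - 1)) ↔
      (d - 1) * (d - 2 + 2 * s) ^ 2 < 4 * (1 - s) * (d - 1 + s) * t ^ 2 := by
  have hw : 0 < t ^ 2 + d - 1 := by nlinarith [sq_nonneg t]
  have hu' : 0 ≤ (d - 2) / 2 + s := by linarith
  have key : d ^ 2 - (d - 2 + 2 * s) ^ 2 = 4 * (1 - s) * (d - 1 + s) := by ring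
  rw [lt_div_iff₀ (by positivity),
    ← pow_lt_pow_iff_left₀ (by positivity) (by positivity) two_ne_zero,
    mul_pow, mul_pow, Real.sq_sqrt hw.le]
  constructor <;> intro h <;> nlinarith [key]

theorem n_eq_div_one_sub {p n : ℝ} (hs : s ≠ 1) (hu : d - 2 + 2 * s ≠ 0)
    (hp : p = 2 * d / (d - 2 + 2 * s)) (hn : n = 2 * p / (p - 2)) : n = d / (1 - s) := by
  have hp2 : p - 2 = 4 * (1 - s) / (d - 2 + 2 * s) := by
    rw [hp]; field_simp; ring
  rw [hn, hp2, hp]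
  field_simp
  ring

theorem alphaFS_lt_iff (hs : s < 1) (ht : 0 < t) (hu : 0 < d - 2 + 2 * s) :
    √((d - 1) / (d / (1 - s) - 1)) < 2 * (1 - s) * t / (d - 2 + 2 * s) ↔
      (d - 1) * (d - 2 + 2 * s) ^ 2 < 4 * (1 - s) * (d - 1 + s) * t ^ 2 := by
  have h1s : 0 < 1 - s := by linarith
  have hv : 0 < d - 1 + s := by linarith
  have hn1 : d / (1 - s) - 1 = (d - 1 + s) / (1 - s) := by field_simp; ring
  rw [Real.sqrt_lt' (by positivity), hn1, div_pow, div_div_eq_mul_div,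
    div_lt_div_iff₀ hv (by positivity)]
  constructor <;> intro h <;> nlinarith [mul_pos h1s h1s]

end FelliSchneider

open FelliSchneider in
theorem felli_schneider_region_equivalence (d : ℕ) (hd : 2 ≤ d) (a b p α n : ℝ)
    (ha : a < ((d : ℝ) - 2) / 2) (hab : a < b) (hba : b < a + 1)
    (hp : p = 2 * d / ((d : ℝ) - 2 + 2 * (b - a)))
    (hα : α = (1 + a - b) * (((d : ℝ) - 2) / 2 - a) / (((d : ℝ) - 2) / 2 - a + b))
    (hn : n = 2 * p / (p - 2)) :
    b < (d : ℝ) * (((d : ℝ) - 2) / 2 - a) /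
        (2 * Real.sqrt ((((d : ℝ) - 2) / 2 - a) ^ 2 + (d : ℝ) - 1)) + a - ((d : ℝ) - 2) / 2
      ↔ α > Real.sqrt (((d : ℝ) - 1) / (n - 1)) := by
  have hd' : (2 : ℝ) ≤ d := by exact_mod_cast hd
  set t := ((d : ℝ) - 2) / 2 - a with ht
  set s := b - a with hs
  have hu : 0 < (d : ℝ) - 2 + 2 * s := by linarith
  have hα' : α = 2 * (1 - s) * t / ((d : ℝ) - 2 + 2 * s) := by
    have hden : t + b = ((d : ℝ) - 2 + 2 * s) / 2 := by rw [ht, hs]; ring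
    rw [hα, hden, hs]
    field_simp
    ring
  have hb : b < d * t / (2 * √(t ^ 2 + d - 1)) + a - (d - 2) / 2 ↔
      (d - 2) / 2 + s < d * t / (2 * √(t ^ 2 + d - 1)) := by
    constructor <;> intro h <;> linarith
  rw [hb, gt_iff_lt, n_eq_div_one_sub (by linarith) hu.ne' hp hn, hα',
    lt_bFS_iff (by linarith) (by linarith) hu.le, alphaFS_lt_iff (by linarith) (by linarith) hu]
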